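/- Let U ⊆ ℝ^{2n} be open, identified with an open subset of ℂ^n via complex coordinates z^m. Let I be the canonical constant complex structure (I_m{}^n = −iδ, I_{m̄}{}^{n̄} = +iδ, mixed components zero) and let J, K be smooth real (1,1)-tensor fields on U such that at every point I, J, K satisfy the quaternion relations IJ = −JI = K, JK = −KJ = I, KI = −IK = J. Let g be a real metric on U whose only nonzero components are g_{m n̄} = g_{n̄ m} = h_{m n̄} with h smooth, Hermitian and positive definite, let Γ be its Christoffel symbols, let C be a smooth real totally antisymmetric 3-tensor on U, and set Γ̂^Q_{PM} = Γ^Q_{PM} + ½ g^{QS} C_{SPM} with covariant derivative ∇̂_L T_N{}^M = ∂_L T_N{}^M − Γ̂^Q_{LN} T_Q{}^M + Γ̂^M_{LQ} T_N{}^Q. If the symmetrized covariant constancy ∇̂_L T_N{}^M + ∇̂_N T_L{}^M = 0 holds on U for each T ∈ {I, J, K}, then all three structures are fully covariantly constant: ∇̂_L I_N{}^M = ∇̂_L J_N{}^M = ∇̂_L K_N{}^M = 0 for all indices; in particular Γ̂^m_{N r̄} = 0 and Γ̂^{m̄}_{N r} = 0 for every index N (holomorphic or antiholomorphic). -/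

import Mathlib

open Complex

noncomputable section

/-- A point of `ℂ^n` (identified with `ℝ^{2n}`). -/
abbrev Pt (n : ℕ) := Fin n → ℂ

/-- A tensor index: `Sum.inl m` is the holomorphic index `m`, `Sum.inr m` the
antiholomorphic index `m̄`. -/
abbrev Idx (n : ℕ) := Fin n ⊕ Fin n

/-- The Wirtinger derivative `∂_M` in the direction of the index `M`:
`∂_m = ½(∂/∂x^m - i ∂/∂y^m)` and `∂_{m̄} = ½(∂/∂x^m + i ∂/∂y^m)`, expressed through the
real Fréchet derivative. -/
noncomputable def wder {n : ℕ} (M : Idx n) (f : Pt n → ℂ) (z : Pt n) : ℂ :=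
  match M with
  | Sum.inl m =>
      (1 / 2 : ℂ) *
        (fderiv ℝ f z (Pi.single m 1) - Complex.I * fderiv ℝ f z (Pi.single m Complex.I))
  | Sum.inr m =>
      (1 / 2 : ℂ) *
        (fderiv ℝ f z (Pi.single m 1) + Complex.I * fderiv ℝ f z (Pi.single m Complex.I))

open scoped ComplexOrder

/-- The canonical constant complex structure `I`. -/
def Ican (n : ℕ) : Idx n → Idx n → ℂ := fun M N =>
  match M, N with
  | Sum.inl m, Sum.inl k => if m = k then -Complex.I else 0
  | Sum.inr m, Sum.inr k => if m = k then Complex.I else 0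
  | _, _ => 0

/-- The components of the Hermitian metric: the only nonzero ones are
`g_{m n̄} = g_{n̄ m} = h_{m n̄}`. -/
noncomputable def gfun {n : ℕ} (h : Pt n → Matrix (Fin n) (Fin n) ℂ) :
    Idx n → Idx n → Pt n → ℂ := fun M N x =>
  match M, N with
  | Sum.inl m, Sum.inr k => h x m k
  | Sum.inr k, Sum.inl m => h x m k
  | _, _ => 0

/-- The metric as a matrix (for inverting). -/
noncomputable def gmat {n : ℕ} (h : Pt n → Matrix (Fin n) (Fin n) ℂ) (x : Pt n) :
    Matrix (Idx n) (Idx n) ℂ := Matrix.of fun M N => gfun h M N x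

/-- The Christoffel symbols `Γ^Q_{PM} = ½ g^{QN}(∂_P g_{NM} + ∂_M g_{NP} - ∂_N g_{PM})`. -/
noncomputable def christ {n : ℕ} (h : Pt n → Matrix (Fin n) (Fin n) ℂ)
    (Q P M : Idx n) (x : Pt n) : ℂ :=
  (1 / 2 : ℂ) * ∑ N : Idx n, (gmat h x)⁻¹ Q N *
    (wder P (gfun h N M) x + wder M (gfun h N P) x - wder N (gfun h P M) x)

/-- The torsionful Bismut-type connection `Γ̂^Q_{PM} = Γ^Q_{PM} + ½ g^{QS} C_{SPM}`. -/
noncomputable def bism {n : ℕ} (h : Pt n → Matrix (Fin n) (Fin n) ℂ)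
    (C : Idx n → Idx n → Idx n → Pt n → ℂ) (Q P M : Idx n) (x : Pt n) : ℂ :=
  christ h Q P M x + (1 / 2 : ℂ) * ∑ S : Idx n, (gmat h x)⁻¹ Q S * C S P M x

/-- `I` as a (constant) tensor field. -/
def IcanT (n : ℕ) : Idx n → Idx n → Pt n → ℂ := fun M N _ => Ican n M N

/-- Pointwise product of two (1,1)-tensor fields: `(A·B)_M{}^P = A_M{}^Q B_Q{}^P`. -/
noncomputable def tmul {n : ℕ} (A B : Idx n → Idx n → Pt n → ℂ) (M P : Idx n) (x : Pt n) : ℂ :=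
  ∑ Q : Idx n, A M Q x * B Q P x

/-- Covariant derivative `∇̂_L T_N{}^M = ∂_L T_N{}^M - Γ̂^Q_{LN} T_Q{}^M + Γ̂^M_{LQ} T_N{}^Q`. -/
noncomputable def covd {n : ℕ} (Γ : Idx n → Idx n → Idx n → Pt n → ℂ)
    (T : Idx n → Idx n → Pt n → ℂ) (L N M : Idx n) (x : Pt n) : ℂ :=
  wder L (T N M) x - (∑ Q : Idx n, Γ Q L N x * T Q M x) + ∑ Q : Idx n, Γ M L Q x * T N Q x

namespace Stmt11Aux

open Finset Filter

variable {n : ℕ}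

/-- sign of the canonical complex structure on each index type -/
def eps : Idx n → ℂ := Sum.elim (fun _ => -Complex.I) (fun _ => Complex.I)

lemma Ican_eq (Q M : Idx n) : Ican n Q M = if Q = M then eps M else 0 := by
  cases Q <;> cases M <;> simp [Ican, eps]

lemma wder_congr {M : Idx n} {f g : Pt n → ℂ} {x : Pt n}
    (h : f =ᶠ[nhds x] g) : wder M f x = wder M g x := by
  unfold wder
  cases M <;> rw [h.fderiv_eq]

lemma wder_const (M : Idx n) (c : ℂ) (x : Pt n) : wder M (fun _ => c) x = 0 := by
  unfold wder
  cases M <;> simp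

lemma wder_const_mul {M : Idx n} {f : Pt n → ℂ} {x : Pt n} (c : ℂ)
    (hf : DifferentiableAt ℝ f x) :
    wder M (fun y => c * f y) x = c * wder M f x := by
  unfold wder
  cases M <;> rw [fderiv_const_mul hf c] <;>
    simp [ContinuousLinearMap.smul_apply, smul_eq_mul] <;> ring

lemma wder_sum_mul {M : Idx n} {x : Pt n} (A B : Idx n → Pt n → ℂ)
    (hA : ∀ Q, DifferentiableAt ℝ (A Q) x) (hB : ∀ Q, DifferentiableAt ℝ (B Q) x) :
    wder M (fun y => ∑ Q : Idx n, A Q y * B Q y) x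
      = ∑ Q : Idx n, (wder M (A Q) x * B Q x + A Q x * wder M (B Q) x) := by
  have hd : fderiv ℝ (fun y => ∑ Q : Idx n, A Q y * B Q y) x
      = ∑ Q : Idx n, (A Q x • fderiv ℝ (B Q) x + B Q x • fderiv ℝ (A Q) x) := by
    rw [fderiv_fun_sum (A := fun Q y => A Q y * B Q y) (fun Q _ => ((hA Q).mul (hB Q)))]
    exact Finset.sum_congr rfl fun Q _ => fderiv_fun_mul (hA Q) (hB Q)
  unfold wder
  cases M with
  | inl m =>
    rw [hd]
    simp only [ContinuousLinearMap.sum_apply, ContinuousLinearMap.add_apply,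
      ContinuousLinearMap.smul_apply, smul_eq_mul, Finset.mul_sum]
    rw [← Finset.sum_sub_distrib, Finset.mul_sum]
    exact Finset.sum_congr rfl fun Q _ => by ring
  | inr m =>
    rw [hd]
    simp only [ContinuousLinearMap.sum_apply, ContinuousLinearMap.add_apply,
      ContinuousLinearMap.smul_apply, smul_eq_mul, Finset.mul_sum]
    rw [← Finset.sum_add_distrib, Finset.mul_sum]
    exact Finset.sum_congr rfl fun Q _ => by ring

lemma kill1 (u v : Fin n → Fin n → ℂ)
    (huv : ∀ i k, ∑ j, u i j * v j k = if i = k then -1 else 0)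
    (f : Fin n → ℂ) (hf : ∀ i, ∑ j, f j * v i j = 0) : ∀ j, f j = 0 := by
  intro j
  have h1 : ∑ i, u j i * ∑ q, f q * v i q = -f j := by
    simp only [Finset.mul_sum]
    rw [Finset.sum_comm]
    have h2 : ∀ q, ∑ i, u j i * (f q * v i q) = f q * (if j = q then -1 else 0) := by
      intro q
      rw [← huv j q, Finset.mul_sum]
      exact Finset.sum_congr rfl fun i _ => by ring
    rw [Finset.sum_congr rfl fun q _ => h2 q]
    simp [mul_ite, Finset.sum_ite_eq]
  rw [Finset.sum_congr rfl fun i (_ : i ∈ Finset.univ) => by rw [hf i, mul_zero]] at h1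
  simpa using h1.symm

lemma kill2 (u v : Fin n → Fin n → ℂ)
    (huv : ∀ i k, ∑ j, u i j * v j k = if i = k then -1 else 0)
    (f : Fin n → ℂ) (hf : ∀ k, ∑ j, f j * u j k = 0) : ∀ i, f i = 0 := by
  intro i
  have h1 : ∑ k, (∑ j, f j * u j k) * v k i = -f i := by
    simp only [Finset.sum_mul]
    rw [Finset.sum_comm]
    have h2 : ∀ j, ∑ k, f j * u j k * v k i = f j * (if j = i then -1 else 0) := by
      intro j
      rw [← huv j i, Finset.mul_sum]
      exact Finset.sum_congr rfl fun k _ => by ring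
    rw [Finset.sum_congr rfl fun j _ => h2 j]
    simp [mul_ite, Finset.sum_ite_eq']
  rw [Finset.sum_congr rfl fun k (_ : k ∈ Finset.univ) => by rw [hf k, zero_mul]] at h1
  simpa using h1.symm

end Stmt11Aux

namespace Stmt11Aux

open Finset Filter

variable {n : ℕ}

lemma covd_expand (G : Idx n → Idx n → Idx n → Pt n → ℂ)
    (T : Idx n → Idx n → Pt n → ℂ) (L N M : Idx n) (x : Pt n) :
    covd G T L N M x = wder L (T N M) x
      - ((∑ q : Fin n, G (Sum.inl q) L N x * T (Sum.inl q) M x)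
          + ∑ q : Fin n, G (Sum.inr q) L N x * T (Sum.inr q) M x)
      + ((∑ q : Fin n, G M L (Sum.inl q) x * T N (Sum.inl q) x)
          + ∑ q : Fin n, G M L (Sum.inr q) x * T N (Sum.inr q) x) := by
  unfold covd
  rw [Fintype.sum_sum_type, Fintype.sum_sum_type]

lemma covd_IcanT (G : Idx n → Idx n → Idx n → Pt n → ℂ) (L N M : Idx n) (x : Pt n) :
    covd G (IcanT n) L N M x = (eps N - eps M) * G M L N x := by
  unfold covd IcanT
  have h0 : wder L (fun _ => Ican n N M) x = 0 := wder_const _ _ _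
  rw [h0]
  have h1 : ∑ Q : Idx n, G Q L N x * Ican n Q M = G M L N x * eps M := by
    rw [Finset.sum_congr rfl fun Q (_ : Q ∈ Finset.univ) => by rw [Ican_eq Q M]]
    simp [mul_ite, Finset.sum_ite_eq']
  have h2 : ∑ Q : Idx n, G M L Q x * Ican n N Q = G M L N x * eps N := by
    have : ∀ Q : Idx n, Ican n N Q = if N = Q then eps Q else 0 := fun Q => Ican_eq N Q
    rw [Finset.sum_congr rfl fun Q (_ : Q ∈ Finset.univ) => by rw [this Q]]
    simp [mul_ite, Finset.sum_ite_eq]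
  rw [h1, h2]; ring

/-- the tensor `-δ` -/
def Del (n : ℕ) : Idx n → Idx n → Pt n → ℂ := fun N M _ => if N = M then -1 else 0

lemma covd_del (G : Idx n → Idx n → Idx n → Pt n → ℂ) (L N M : Idx n) (x : Pt n) :
    covd G (Del n) L N M x = 0 := by
  unfold covd Del
  have h0 : wder L (fun _ => if N = M then (-1:ℂ) else 0) x = 0 := wder_const _ _ _
  rw [h0]
  have h1 : ∑ Q : Idx n, G Q L N x * (if Q = M then (-1:ℂ) else 0) = -G M L N x := by
    simp [mul_ite, Finset.sum_ite_eq']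
  have h2 : ∑ Q : Idx n, G M L Q x * (if N = Q then (-1:ℂ) else 0) = -G M L N x := by
    simp [mul_ite, Finset.sum_ite_eq]
  rw [h1, h2]; ring

lemma covd_congr (G : Idx n → Idx n → Idx n → Pt n → ℂ)
    {T T' : Idx n → Idx n → Pt n → ℂ} (L N M : Idx n) (x : Pt n)
    (h : ∀ N M : Idx n, T N M =ᶠ[nhds x] T' N M) :
    covd G T L N M x = covd G T' L N M x := by
  unfold covd
  rw [wder_congr (h N M)]
  congr 1
  · congr 1
    exact Finset.sum_congr rfl fun Q _ => by rw [(h Q M).eq_of_nhds]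
  · exact Finset.sum_congr rfl fun Q _ => by rw [(h N Q).eq_of_nhds]

lemma covd_tmul (G : Idx n → Idx n → Idx n → Pt n → ℂ)
    (A B : Idx n → Idx n → Pt n → ℂ) (L N M : Idx n) (x : Pt n)
    (hA : ∀ P Q : Idx n, DifferentiableAt ℝ (A P Q) x)
    (hB : ∀ P Q : Idx n, DifferentiableAt ℝ (B P Q) x) :
    covd G (tmul A B) L N M x
      = (∑ Q : Idx n, covd G A L N Q x * B Q M x)
        + ∑ Q : Idx n, A N Q x * covd G B L Q M x := by
  have hw : wder L (fun y => ∑ Q : Idx n, A N Q y * B Q M y) x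
      = ∑ Q : Idx n, (wder L (A N Q) x * B Q M x + A N Q x * wder L (B Q M) x) :=
    wder_sum_mul (fun Q => A N Q) (fun Q => B Q M) (fun Q => hA N Q) (fun Q => hB Q M)
  unfold covd tmul
  rw [hw]
  have e1 : ∑ Q : Idx n, G Q L N x * ∑ P : Idx n, A Q P x * B P M x
      = ∑ Q : Idx n, ∑ P : Idx n, G P L N x * A P Q x * B Q M x := by
    simp only [Finset.mul_sum]
    rw [Finset.sum_comm]
    exact Finset.sum_congr rfl fun Q _ => Finset.sum_congr rfl fun P _ => by ring
  have e2 : ∑ Q : Idx n, G M L Q x * ∑ P : Idx n, A N P x * B P Q x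
      = ∑ Q : Idx n, ∑ P : Idx n, A N Q x * (G M L P x * B Q P x) := by
    simp only [Finset.mul_sum]
    rw [Finset.sum_comm]
    exact Finset.sum_congr rfl fun Q _ => Finset.sum_congr rfl fun P _ => by ring
  have e3 : ∑ Q : Idx n, ∑ P : Idx n, G Q L P x * A N P x * B Q M x
      = ∑ Q : Idx n, ∑ P : Idx n, A N Q x * (G P L Q x * B P M x) := by
    rw [Finset.sum_comm]
    exact Finset.sum_congr rfl fun Q _ => Finset.sum_congr rfl fun P _ => by ring
  rw [e1, e2]
  simp only [sub_mul, add_mul, Finset.sum_mul, mul_sub, mul_add, Finset.mul_sum,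
    Finset.sum_add_distrib, Finset.sum_sub_distrib]
  linear_combination -e3

end Stmt11Aux

namespace Stmt11Aux

variable {n : ℕ}

lemma sum_mul_const_left (c : ℂ) (f g : Fin n → ℂ) :
    ∑ q, f q * (c * g q) = c * ∑ q, f q * g q := by
  rw [Finset.mul_sum]
  exact Finset.sum_congr rfl fun q _ => by ring

end Stmt11Aux

open Stmt11Aux

/-- Theorem 5: if the quaternionic triple `I, J, K` (with `I` canonical
constant, `J`, `K` smooth and real) satisfies the symmetrized covariant constancy
`∇̂_L T_N{}^M + ∇̂_N T_L{}^M = 0` with respect to the torsionful connection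
`Γ̂ = Γ + ½ g⁻¹ C` built from a Hermitian metric `h` and a real totally antisymmetric
smooth torsion `C`, then all three structures are fully covariantly constant,
`∇̂_L T_N{}^M = 0`; in particular `Γ̂^m_{N r̄} = 0` and `Γ̂^{m̄}_{N r} = 0`. -/
theorem stmt11 (n : ℕ) (U : Set (Pt n)) (hU : IsOpen U)
    (h : Pt n → Matrix (Fin n) (Fin n) ℂ)
    (hsm : ∀ m k, ContDiffOn ℝ (⊤ : ℕ∞) (fun x => h x m k) U)
    (hpos : ∀ x ∈ U, (h x).PosDef)
    (C : Idx n → Idx n → Idx n → Pt n → ℂ)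
    (hCsm : ∀ S P M, ContDiffOn ℝ (⊤ : ℕ∞) (C S P M) U)
    (hCreal : ∀ (S P M : Idx n), ∀ x ∈ U,
      C (Sum.swap S) (Sum.swap P) (Sum.swap M) x = (starRingEnd ℂ) (C S P M x))
    (hCanti : ∀ (S P M : Idx n), ∀ x ∈ U,
      C S P M x = -C P S M x ∧ C S P M x = -C S M P x)
    (J K : Idx n → Idx n → Pt n → ℂ)
    (hJsm : ∀ M N, ContDiffOn ℝ (⊤ : ℕ∞) (J M N) U)
    (hKsm : ∀ M N, ContDiffOn ℝ (⊤ : ℕ∞) (K M N) U)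
    (hJreal : ∀ (M N : Idx n), ∀ x ∈ U,
      J (Sum.swap M) (Sum.swap N) x = (starRingEnd ℂ) (J M N x))
    (hKreal : ∀ (M N : Idx n), ∀ x ∈ U,
      K (Sum.swap M) (Sum.swap N) x = (starRingEnd ℂ) (K M N x))
    (hquat : ∀ (M P : Idx n), ∀ x ∈ U,
      tmul (IcanT n) J M P x = K M P x ∧
      tmul J (IcanT n) M P x = -K M P x ∧
      tmul J K M P x = IcanT n M P x ∧
      tmul K J M P x = -IcanT n M P x ∧
      tmul K (IcanT n) M P x = J M P x ∧
      tmul (IcanT n) K M P x = -J M P x)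
    (hsymcov : ∀ T ∈ ({IcanT n, J, K} : Set (Idx n → Idx n → Pt n → ℂ)),
      ∀ (L N M : Idx n), ∀ x ∈ U,
        covd (bism h C) T L N M x + covd (bism h C) T N L M x = 0) :
    (∀ T ∈ ({IcanT n, J, K} : Set (Idx n → Idx n → Pt n → ℂ)),
      ∀ (L N M : Idx n), ∀ x ∈ U, covd (bism h C) T L N M x = 0) ∧
    (∀ (N : Idx n) (m r : Fin n), ∀ x ∈ U,
      bism h C (Sum.inl m) N (Sum.inr r) x = 0 ∧
      bism h C (Sum.inr m) N (Sum.inl r) x = 0) := by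
  classical
  set G := bism h C with hGdef
  have hI_mem : IcanT n ∈ ({IcanT n, J, K} : Set (Idx n → Idx n → Pt n → ℂ)) :=
    Set.mem_insert _ _
  have hJ_mem : J ∈ ({IcanT n, J, K} : Set (Idx n → Idx n → Pt n → ℂ)) :=
    Set.mem_insert_of_mem _ (Set.mem_insert _ _)
  have hK_mem : K ∈ ({IcanT n, J, K} : Set (Idx n → Idx n → Pt n → ℂ)) :=
    Set.mem_insert_of_mem _ (Set.mem_insert_of_mem _ rfl)
  have hJd : ∀ (M N : Idx n) (y : Pt n), y ∈ U → DifferentiableAt ℝ (J M N) y :=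
    fun M N y hy => ((hJsm M N).contDiffAt (hU.mem_nhds hy)).differentiableAt (by simp)
  -- `wder` of a function vanishing on U
  have wU0 : ∀ (L : Idx n) (f : Pt n → ℂ) (y : Pt n), y ∈ U → (∀ z ∈ U, f z = 0) →
      wder L f y = 0 := by
    intro L f y hy hf
    rw [wder_congr (Filter.eventuallyEq_of_mem (hU.mem_nhds hy) fun z hz => hf z hz)]
    exact wder_const _ 0 _
  have wUmul : ∀ (L : Idx n) (c : ℂ) (f g : Pt n → ℂ) (y : Pt n), y ∈ U →
      (∀ z ∈ U, f z = c * g z) → DifferentiableAt ℝ g y →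
      wder L f y = c * wder L g y := by
    intro L c f g y hy hf hg
    rw [wder_congr (Filter.eventuallyEq_of_mem (hU.mem_nhds hy) fun z hz => hf z hz)]
    exact wder_const_mul c hg
  -- pointwise quaternion algebra
  have hKl : ∀ y ∈ U, ∀ (m : Fin n) (P : Idx n),
      K (Sum.inl m) P y = -Complex.I * J (Sum.inl m) P y := by
    intro y hy m P
    have e := (hquat (Sum.inl m) P y hy).1
    rw [show tmul (IcanT n) J (Sum.inl m) P y = -Complex.I * J (Sum.inl m) P y by
      unfold tmul IcanT
      rw [Finset.sum_congr rfl fun Q (_ : Q ∈ Finset.univ) => by rw [Ican_eq (Sum.inl m) Q]]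
      simp [ite_mul, Finset.sum_ite_eq, eps]] at e
    exact e.symm
  have hKr : ∀ y ∈ U, ∀ (m : Fin n) (P : Idx n),
      K (Sum.inr m) P y = Complex.I * J (Sum.inr m) P y := by
    intro y hy m P
    have e := (hquat (Sum.inr m) P y hy).1
    rw [show tmul (IcanT n) J (Sum.inr m) P y = Complex.I * J (Sum.inr m) P y by
      unfold tmul IcanT
      rw [Finset.sum_congr rfl fun Q (_ : Q ∈ Finset.univ) => by rw [Ican_eq (Sum.inr m) Q]]
      simp [ite_mul, Finset.sum_ite_eq, eps]] at e
    exact e.symm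
  have hJIl : ∀ y ∈ U, ∀ (M : Idx n) (p : Fin n),
      tmul J (IcanT n) M (Sum.inl p) y = -Complex.I * J M (Sum.inl p) y := by
    intro y hy M p
    unfold tmul IcanT
    rw [Finset.sum_congr rfl fun Q (_ : Q ∈ Finset.univ) => by rw [Ican_eq Q (Sum.inl p)]]
    simp [mul_ite, Finset.sum_ite_eq', eps]
    ring
  have hJIr : ∀ y ∈ U, ∀ (M : Idx n) (p : Fin n),
      tmul J (IcanT n) M (Sum.inr p) y = Complex.I * J M (Sum.inr p) y := by
    intro y hy M p
    unfold tmul IcanT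
    rw [Finset.sum_congr rfl fun Q (_ : Q ∈ Finset.univ) => by rw [Ican_eq Q (Sum.inr p)]]
    simp [mul_ite, Finset.sum_ite_eq', eps]
    ring
  have hJ0l : ∀ y ∈ U, ∀ m p : Fin n, J (Sum.inl m) (Sum.inl p) y = 0 := by
    intro y hy m p
    have e1 := (hquat (Sum.inl m) (Sum.inl p) y hy).2.1
    rw [hJIl y hy (Sum.inl m) p, hKl y hy m (Sum.inl p)] at e1
    linear_combination (Complex.I / 2) * e1 + (J (Sum.inl m) (Sum.inl p) y) * Complex.I_sq
  have hJ0r : ∀ y ∈ U, ∀ m p : Fin n, J (Sum.inr m) (Sum.inr p) y = 0 := by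
    intro y hy m p
    have e1 := (hquat (Sum.inr m) (Sum.inr p) y hy).2.1
    rw [hJIr y hy (Sum.inr m) p, hKr y hy m (Sum.inr p)] at e1
    linear_combination (-Complex.I / 2) * e1 + (J (Sum.inr m) (Sum.inr p) y) * Complex.I_sq
  have hK0l : ∀ y ∈ U, ∀ m p : Fin n, K (Sum.inl m) (Sum.inl p) y = 0 := by
    intro y hy m p
    rw [hKl y hy m (Sum.inl p), hJ0l y hy m p, mul_zero]
  have hK0r : ∀ y ∈ U, ∀ m p : Fin n, K (Sum.inr m) (Sum.inr p) y = 0 := by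
    intro y hy m p
    rw [hKr y hy m (Sum.inr p), hJ0r y hy m p, mul_zero]
  have hBA : ∀ y ∈ U, ∀ p q : Fin n,
      ∑ r, J (Sum.inl p) (Sum.inr r) y * J (Sum.inr r) (Sum.inl q) y
        = if p = q then -1 else 0 := by
    intro y hy p q
    have e := (hquat (Sum.inl p) (Sum.inl q) y hy).2.2.1
    rw [show tmul J K (Sum.inl p) (Sum.inl q) y
        = Complex.I * ∑ r, J (Sum.inl p) (Sum.inr r) y * J (Sum.inr r) (Sum.inl q) y by
      unfold tmul
      rw [Fintype.sum_sum_type]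
      rw [Finset.sum_congr rfl fun r (_ : r ∈ Finset.univ) => by
        rw [hJ0l y hy p r, zero_mul]]
      rw [Finset.sum_const_zero, zero_add, Finset.mul_sum]
      exact Finset.sum_congr rfl fun r _ => by rw [hKr y hy r (Sum.inl q)]; ring] at e
    rw [show IcanT n (Sum.inl p) (Sum.inl q) y = if p = q then -Complex.I else 0 by
      simp [IcanT, Ican]] at e
    refine mul_left_cancel₀ Complex.I_ne_zero ?_
    rw [e]
    split_ifs <;> ring
  have hAB : ∀ y ∈ U, ∀ p q : Fin n,
      ∑ r, J (Sum.inr p) (Sum.inl r) y * J (Sum.inl r) (Sum.inr q) y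
        = if p = q then -1 else 0 := by
    intro y hy p q
    have e := (hquat (Sum.inr p) (Sum.inr q) y hy).2.2.1
    rw [show tmul J K (Sum.inr p) (Sum.inr q) y
        = -Complex.I * ∑ r, J (Sum.inr p) (Sum.inl r) y * J (Sum.inl r) (Sum.inr q) y by
      unfold tmul
      rw [Fintype.sum_sum_type]
      rw [show (∑ r, J (Sum.inr p) (Sum.inr r) y * K (Sum.inr r) (Sum.inr q) y) = 0 from
        Finset.sum_eq_zero fun r _ => by rw [hJ0r y hy p r, zero_mul]]
      rw [add_zero, Finset.mul_sum]
      exact Finset.sum_congr rfl fun r _ => by rw [hKl y hy r (Sum.inr q)]; ring] at e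
    rw [show IcanT n (Sum.inr p) (Sum.inr q) y = if p = q then Complex.I else 0 by
      simp [IcanT, Ican]] at e
    refine mul_left_cancel₀ (neg_ne_zero.mpr Complex.I_ne_zero) ?_
    rw [e]
    split_ifs <;> ring
  -- the four vanishing families of connection coefficients
  have hT1 : ∀ y ∈ U, ∀ l r m : Fin n, G (Sum.inl m) (Sum.inl l) (Sum.inr r) y = 0 := by
    intro y hy l r m
    have e := hsymcov (IcanT n) hI_mem (Sum.inl l) (Sum.inr r) (Sum.inl m) y hy
    rw [covd_IcanT, covd_IcanT] at e
    simp only [eps, Sum.elim_inl, Sum.elim_inr] at e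
    linear_combination (-Complex.I / 2) * e
      + (G (Sum.inl m) (Sum.inl l) (Sum.inr r) y) * Complex.I_sq
  have hT2 : ∀ y ∈ U, ∀ l r m : Fin n, G (Sum.inr m) (Sum.inr l) (Sum.inl r) y = 0 := by
    intro y hy l r m
    have e := hsymcov (IcanT n) hI_mem (Sum.inr l) (Sum.inl r) (Sum.inr m) y hy
    rw [covd_IcanT, covd_IcanT] at e
    simp only [eps, Sum.elim_inl, Sum.elim_inr] at e
    linear_combination (Complex.I / 2) * e
      + (G (Sum.inr m) (Sum.inr l) (Sum.inl r) y) * Complex.I_sq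
  have hT3 : ∀ y ∈ U, ∀ l r m : Fin n, G (Sum.inl m) (Sum.inr l) (Sum.inr r) y = 0 := by
    intro y hy l r m
    have key : ∀ n' : Fin n,
        ∑ q, G (Sum.inl m) (Sum.inr l) (Sum.inr q) y * J (Sum.inl n') (Sum.inr q) y = 0 := by
      intro n'
      have eJ := hsymcov J hJ_mem (Sum.inr l) (Sum.inl n') (Sum.inl m) y hy
      have eK := hsymcov K hK_mem (Sum.inr l) (Sum.inl n') (Sum.inl m) y hy
      rw [covd_expand, covd_expand] at eJ eK
      rw [wU0 (Sum.inr l) (J (Sum.inl n') (Sum.inl m)) y hy (fun z hz => hJ0l z hz n' m)] at eJ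
      rw [wU0 (Sum.inr l) (K (Sum.inl n') (Sum.inl m)) y hy (fun z hz => hK0l z hz n' m)] at eK
      rw [wUmul (Sum.inl n') Complex.I (K (Sum.inr l) (Sum.inl m)) (J (Sum.inr l) (Sum.inl m))
        y hy (fun z hz => hKr z hz l (Sum.inl m)) (hJd (Sum.inr l) (Sum.inl m) y hy)] at eK
      simp only [hJ0l y hy, hK0l y hy, hKl y hy, hKr y hy, mul_zero, zero_mul,
        Finset.sum_const_zero, add_zero, zero_add, sub_zero, zero_sub, neg_zero,
        sum_mul_const_left] at eJ eK
      linear_combination (-(Complex.I * Complex.I) / 2) * eJ + (Complex.I / 2) * eK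
        + (∑ q, G (Sum.inl m) (Sum.inr l) (Sum.inr q) y * J (Sum.inl n') (Sum.inr q) y)
          * Complex.I_sq
    exact kill1 (fun i j => J (Sum.inr i) (Sum.inl j) y) (fun i j => J (Sum.inl i) (Sum.inr j) y)
      (fun i k => hAB y hy i k) _ key r
  have hT4 : ∀ y ∈ U, ∀ l r m : Fin n, G (Sum.inr m) (Sum.inl l) (Sum.inl r) y = 0 := by
    intro y hy l r m
    have key : ∀ n' : Fin n,
        ∑ q, G (Sum.inr m) (Sum.inl l) (Sum.inl q) y * J (Sum.inr n') (Sum.inl q) y = 0 := by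
      intro n'
      have eJ := hsymcov J hJ_mem (Sum.inl l) (Sum.inr n') (Sum.inr m) y hy
      have eK := hsymcov K hK_mem (Sum.inl l) (Sum.inr n') (Sum.inr m) y hy
      rw [covd_expand, covd_expand] at eJ eK
      rw [wU0 (Sum.inl l) (J (Sum.inr n') (Sum.inr m)) y hy (fun z hz => hJ0r z hz n' m)] at eJ
      rw [wU0 (Sum.inl l) (K (Sum.inr n') (Sum.inr m)) y hy (fun z hz => hK0r z hz n' m)] at eK
      rw [wUmul (Sum.inr n') (-Complex.I) (K (Sum.inl l) (Sum.inr m)) (J (Sum.inl l) (Sum.inr m))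
        y hy (fun z hz => hKl z hz l (Sum.inr m)) (hJd (Sum.inl l) (Sum.inr m) y hy)] at eK
      simp only [hJ0r y hy, hK0r y hy, hKl y hy, hKr y hy, mul_zero, zero_mul,
        Finset.sum_const_zero, add_zero, zero_add, sub_zero, zero_sub, neg_zero,
        sum_mul_const_left] at eJ eK
      linear_combination (-(Complex.I * Complex.I) / 2) * eJ + (-Complex.I / 2) * eK
        + (∑ q, G (Sum.inr m) (Sum.inl l) (Sum.inl q) y * J (Sum.inr n') (Sum.inl q) y)
          * Complex.I_sq
    exact kill1 (fun i j => J (Sum.inl i) (Sum.inr j) y) (fun i j => J (Sum.inr i) (Sum.inl j) y)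
      (fun i k => hBA y hy i k) _ key r
  have hGz : ∀ y ∈ U, ∀ (N : Idx n) (m r : Fin n),
      G (Sum.inl m) N (Sum.inr r) y = 0 ∧ G (Sum.inr m) N (Sum.inl r) y = 0 := by
    intro y hy N m r
    cases N with
    | inl l => exact ⟨hT1 y hy l r m, hT4 y hy l r m⟩
    | inr l => exact ⟨hT3 y hy l r m, hT2 y hy l r m⟩
  refine ⟨?_, fun N m r x hx => ⟨(hGz x hx N m r).1, (hGz x hx N m r).2⟩⟩
  intro T hT L N M x hx
  have g1 : ∀ (N : Idx n) (m r : Fin n), G (Sum.inl m) N (Sum.inr r) x = 0 :=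
    fun N m r => (hGz x hx N m r).1
  have g2 : ∀ (N : Idx n) (m r : Fin n), G (Sum.inr m) N (Sum.inl r) x = 0 :=
    fun N m r => (hGz x hx N m r).2
  have covdI0 : ∀ (L N M : Idx n), covd G (IcanT n) L N M x = 0 := by
    intro L N M
    rw [covd_IcanT]
    cases N with
    | inl a =>
      cases M with
      | inl b => simp [eps]
      | inr b => rw [g2 L b a]; ring
    | inr a =>
      cases M with
      | inl b => rw [g1 L b a]; ring
      | inr b => simp [eps]
  have covdJpure : ∀ (L : Idx n) (p q : Fin n),
      covd G J L (Sum.inl p) (Sum.inl q) x = 0 ∧ covd G J L (Sum.inr p) (Sum.inr q) x = 0 := by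
    intro L p q
    constructor
    · rw [covd_expand]
      rw [wU0 L (J (Sum.inl p) (Sum.inl q)) x hx (fun z hz => hJ0l z hz p q)]
      simp only [hJ0l x hx, g1, g2, mul_zero, zero_mul, Finset.sum_const_zero,
        add_zero, zero_add, sub_zero, neg_zero]
    · rw [covd_expand]
      rw [wU0 L (J (Sum.inr p) (Sum.inr q)) x hx (fun z hz => hJ0r z hz p q)]
      simp only [hJ0r x hx, g1, g2, mul_zero, zero_mul, Finset.sum_const_zero,
        add_zero, zero_add, sub_zero, neg_zero]
  have covdJmix1 : ∀ l n' m : Fin n, covd G J (Sum.inl l) (Sum.inr n') (Sum.inl m) x = 0 := by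
    intro l n' m
    have e := hsymcov J hJ_mem (Sum.inl l) (Sum.inr n') (Sum.inl m) x hx
    have h2 := (covdJpure (Sum.inr n') l m).1
    linear_combination e - h2
  have covdJmix1' : ∀ l n' m : Fin n, covd G J (Sum.inr l) (Sum.inl n') (Sum.inr m) x = 0 := by
    intro l n' m
    have e := hsymcov J hJ_mem (Sum.inr l) (Sum.inl n') (Sum.inr m) x hx
    have h2 := (covdJpure (Sum.inl n') l m).2
    linear_combination e - h2
  have hJJdel : ∀ (N M : Idx n), ∀ z ∈ U, tmul J J N M z = Del n N M z := by
    intro N M z hz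
    cases N with
    | inl p =>
      cases M with
      | inl q =>
        unfold tmul Del
        rw [Fintype.sum_sum_type]
        rw [show (∑ r, J (Sum.inl p) (Sum.inl r) z * J (Sum.inl r) (Sum.inl q) z) = 0 from
          Finset.sum_eq_zero fun r _ => by rw [hJ0l z hz p r, zero_mul]]
        rw [zero_add, hBA z hz p q]
        simp
      | inr q =>
        unfold tmul Del
        rw [Fintype.sum_sum_type]
        rw [show (∑ r, J (Sum.inl p) (Sum.inl r) z * J (Sum.inl r) (Sum.inr q) z) = 0 from
          Finset.sum_eq_zero fun r _ => by rw [hJ0l z hz p r, zero_mul]]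
        rw [show (∑ r, J (Sum.inl p) (Sum.inr r) z * J (Sum.inr r) (Sum.inr q) z) = 0 from
          Finset.sum_eq_zero fun r _ => by rw [hJ0r z hz r q, mul_zero]]
        simp
    | inr p =>
      cases M with
      | inl q =>
        unfold tmul Del
        rw [Fintype.sum_sum_type]
        rw [show (∑ r, J (Sum.inr p) (Sum.inl r) z * J (Sum.inl r) (Sum.inl q) z) = 0 from
          Finset.sum_eq_zero fun r _ => by rw [hJ0l z hz r q, mul_zero]]
        rw [show (∑ r, J (Sum.inr p) (Sum.inr r) z * J (Sum.inr r) (Sum.inl q) z) = 0 from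
          Finset.sum_eq_zero fun r _ => by rw [hJ0r z hz p r, zero_mul]]
        simp
      | inr q =>
        unfold tmul Del
        rw [Fintype.sum_sum_type]
        rw [show (∑ r, J (Sum.inr p) (Sum.inr r) z * J (Sum.inr r) (Sum.inr q) z) = 0 from
          Finset.sum_eq_zero fun r _ => by rw [hJ0r z hz p r, zero_mul]]
        rw [add_zero, hAB z hz p q]
        simp
  have covdJJ0 : ∀ (L N M : Idx n), covd G (tmul J J) L N M x = 0 := by
    intro L N M
    rw [covd_congr G L N M x (fun N' M' => Filter.eventuallyEq_of_mem (hU.mem_nhds hx)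
      (fun z hz => hJJdel N' M' z hz))]
    exact covd_del G L N M x
  have covdJmix2 : ∀ l n' q : Fin n, covd G J (Sum.inl l) (Sum.inl n') (Sum.inr q) x = 0 := by
    intro l n' q
    have key : ∀ m' : Fin n,
        ∑ j, covd G J (Sum.inl l) (Sum.inl n') (Sum.inr j) x * J (Sum.inr j) (Sum.inl m') x
          = 0 := by
      intro m'
      have lei := covd_tmul G J J (Sum.inl l) (Sum.inl n') (Sum.inl m') x
        (fun P Q => hJd P Q x hx) (fun P Q => hJd P Q x hx)
      rw [covdJJ0] at lei
      rw [Fintype.sum_sum_type, Fintype.sum_sum_type] at lei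
      simp only [hJ0l x hx, covdJmix1, zero_mul, mul_zero, Finset.sum_const_zero,
        add_zero, zero_add] at lei
      exact lei.symm
    exact kill2 (fun i j => J (Sum.inr i) (Sum.inl j) x) (fun i j => J (Sum.inl i) (Sum.inr j) x)
      (fun i k => hAB x hx i k) _ key q
  have covdJmix2' : ∀ l n' q : Fin n, covd G J (Sum.inr l) (Sum.inr n') (Sum.inl q) x = 0 := by
    intro l n' q
    have key : ∀ m' : Fin n,
        ∑ j, covd G J (Sum.inr l) (Sum.inr n') (Sum.inl j) x * J (Sum.inl j) (Sum.inr m') x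
          = 0 := by
      intro m'
      have lei := covd_tmul G J J (Sum.inr l) (Sum.inr n') (Sum.inr m') x
        (fun P Q => hJd P Q x hx) (fun P Q => hJd P Q x hx)
      rw [covdJJ0] at lei
      rw [Fintype.sum_sum_type, Fintype.sum_sum_type] at lei
      simp only [hJ0r x hx, covdJmix1', zero_mul, mul_zero, Finset.sum_const_zero,
        add_zero, zero_add] at lei
      exact lei.symm
    exact kill2 (fun i j => J (Sum.inl i) (Sum.inr j) x) (fun i j => J (Sum.inr i) (Sum.inl j) x)
      (fun i k => hBA x hx i k) _ key q
  have covdJ0 : ∀ (L N M : Idx n), covd G J L N M x = 0 := by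
    intro L N M
    cases N with
    | inl a =>
      cases M with
      | inl b => exact (covdJpure L a b).1
      | inr b =>
        cases L with
        | inl c => exact covdJmix2 c a b
        | inr c => exact covdJmix1' c a b
    | inr a =>
      cases M with
      | inl b =>
        cases L with
        | inl c => exact covdJmix1 c a b
        | inr c => exact covdJmix2' c a b
      | inr b => exact (covdJpure L a b).2
  have covdK0 : ∀ (L N M : Idx n), covd G K L N M x = 0 := by
    intro L N M
    rw [covd_congr G L N M x (fun N' M' => Filter.eventuallyEq_of_mem (hU.mem_nhds hx)
      (fun z hz => ((hquat N' M' z hz).1).symm))]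
    rw [covd_tmul G (IcanT n) J L N M x
      (fun P Q => by unfold IcanT; exact differentiableAt_const _)
      (fun P Q => hJd P Q x hx)]
    rw [Finset.sum_eq_zero fun Q _ => by rw [covdI0, zero_mul],
        Finset.sum_eq_zero fun Q _ => by rw [covdJ0, mul_zero], add_zero]
  simp only [Set.mem_insert_iff, Set.mem_singleton_iff] at hT
  rcases hT with rfl | rfl | rfl
  · exact covdI0 L N M
  · exact covdJ0 L N M
  · exact covdK0 L N M
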